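/- Let (M, g, J) be a Kähler manifold and h a symmetric (1,1)-tensor field anticommuting with J. Then the total alternation of the Kodaira–Spencer bracket vanishes: ⟨[h,h]^c(X,Y),Z⟩ + ⟨[h,h]^c(Y,Z),X⟩ + ⟨[h,h]^c(Z,X),Y⟩ = 0 for all vector fields X, Y, Z. -/
import Mathlib


open scoped RealInnerProductSpace

def dF {V : Type*} [AddCommGroup V] [Module ℝ V]
    (Dh : V → (V →ₗ[ℝ] V)) (X Y : V) : V := Dh X Y - Dh Y X

/-- The Frölicher–Nijenhuis bracket from the pointwise data `Dk X = ∇_X k`. -/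
def FNb {V : Type*} [AddCommGroup V] [Module ℝ V]
    (k : V →ₗ[ℝ] V) (Dk : V → (V →ₗ[ℝ] V)) (X Y : V) : V :=
  -(Dk (k X) Y) + Dk (k Y) X + k (dF Dk X Y)

/-- The Kodaira–Spencer bracket [h,h]^c = (1/2)([h,h]^FN - [Jh,Jh]^FN). -/
noncomputable def KSb {V : Type*} [AddCommGroup V] [Module ℝ V]
    (J h : V →ₗ[ℝ] V) (Dh : V → (V →ₗ[ℝ] V)) (X Y : V) : V :=
  (2:ℝ)⁻¹ • (FNb h Dh X Y - FNb (J ∘ₗ h) (fun Z => J ∘ₗ Dh Z) X Y)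

/-- the total alternation of the Kodaira–Spencer bracket of a symmetric
J-anticommuting h on a Kähler manifold vanishes. -/
theorem stmt14 {V : Type*} [NormedAddCommGroup V] [InnerProductSpace ℝ V]
    (J h : V →ₗ[ℝ] V) (Dh : V → (V →ₗ[ℝ] V))
    (hJ2 : ∀ x : V, J (J x) = -x)
    (hJorth : ∀ x y : V, ⟪J x, J y⟫ = ⟪x, y⟫)
    (hsym : ∀ x y : V, ⟪h x, y⟫ = ⟪x, h y⟫)
    (hanti : h ∘ₗ J = -(J ∘ₗ h))
    (hDadd : ∀ X Y : V, Dh (X + Y) = Dh X + Dh Y)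
    (hDsmul : ∀ (c : ℝ) (X : V), Dh (c • X) = c • Dh X)
    (hDsym : ∀ X x y : V, ⟪Dh X x, y⟫ = ⟪x, Dh X y⟫)
    (hDanti : ∀ X : V, Dh X ∘ₗ J = -(J ∘ₗ Dh X)) :
    ∀ X Y Z : V,
      ⟪KSb J h Dh X Y, Z⟫ + ⟪KSb J h Dh Y Z, X⟫ + ⟪KSb J h Dh Z X, Y⟫ = 0 := by

  have hJh : ∀ x : V, h (J x) = -(J (h x)) := fun x => by
    have := LinearMap.ext_iff.mp hanti x; simpa using this
  have hDJ : ∀ W y : V, Dh W (J y) = -(J (Dh W y)) := fun W y => by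
    have := LinearMap.ext_iff.mp (hDanti W) y; simpa using this
  have hJinner : ∀ x y : V, ⟪J x, y⟫ = -⟪x, J y⟫ := fun x y => by
    have := hJorth x (J y)
    rw [hJ2, inner_neg_right] at this
    linarith
  have Bsym : ∀ W Y Z : V, ⟪J (Dh W Y), Z⟫ = ⟪J (Dh W Z), Y⟫ := fun W Y Z => by
    rw [hJinner, hDsym W Y (J Z), hDJ, inner_neg_right, neg_neg, real_inner_comm,
      hJinner, hDsym, hDJ, inner_neg_right, neg_neg, real_inner_comm]
  have Asym : ∀ W a b : V, ⟪Dh W a, b⟫ = ⟪Dh W b, a⟫ := fun W a b => by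
    rw [hDsym, real_inner_comm]
  have expand : ∀ X Y Z : V, ⟪KSb J h Dh X Y, Z⟫ =
      2⁻¹ * (-⟪Dh (h X) Y, Z⟫ + ⟪Dh (h Y) X, Z⟫
        + ⟪J (Dh (J (h X)) Y), Z⟫ - ⟪J (Dh (J (h Y)) X), Z⟫) := by
    intro X Y Z
    simp only [KSb, FNb, dF, LinearMap.comp_apply, map_sub, map_add, map_neg, hJh, hJ2,
      real_inner_smul_left, inner_sub_left, inner_add_left, inner_neg_left, neg_neg]
    ring
  intro X Y Z
  rw [expand, expand, expand]
  have A1 := Asym (h X) Y Z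
  have A2 := Asym (h Y) Z X
  have A3 := Asym (h Z) X Y
  have B1 := Bsym (J (h X)) Y Z
  have B2 := Bsym (J (h Y)) Z X
  have B3 := Bsym (J (h Z)) X Y
  linarith
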